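/- arXiv:2311.11902 — 4 statements merged into one kernel-verified Lean document; each statement's English description precedes it below -/
import Mathlib

section
/- Let N : (0, r₀] → ℝ be differentiable and satisfy N'(r) ≥ -2c·r·(1 + N(r)) for all r ∈ (0, r₀], with 1 + N(r) > 0 and c ≥ 0. Then for all 0 < s ≤ r ≤ r₀ one has 1 + N(s) ≤ e^{c(r²−s²)}·(1 + N(r)); in particular N(s) ≤ e^{c(r²−s²)}N(r) + (e^{c(r²−s²)} − 1). -/
/-! If `u' ≥ -φ' u`, then `(e^φ u)' = e^φ (u' + φ' u) ≥ 0`, so `e^φ u` is nondecreasing.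
With `u = 1 + N` and `φ r = c r²` this gives `e^{c s²}(1 + N s) ≤ e^{c r²}(1 + N r)`. -/

open Real Set

theorem monotoneOn_exp_mul_of_neg_mul_le_deriv {D : Set ℝ} (hD : Convex ℝ D)
    {u u' φ φ' : ℝ → ℝ} (hu : ∀ x ∈ D, HasDerivAt u (u' x) x)
    (hφ : ∀ x ∈ D, HasDerivAt φ (φ' x) x) (h : ∀ x ∈ D, -φ' x * u x ≤ u' x) :
    MonotoneOn (fun x => exp (φ x) * u x) D := by
  have hderiv : ∀ x ∈ D,
      HasDerivAt (fun x => exp (φ x) * u x) (exp (φ x) * (u' x + φ' x * u x)) x := fun x hx =>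
    ((hφ x hx).exp.mul (hu x hx)).congr_deriv (by ring)
  refine monotoneOn_of_hasDerivWithinAt_nonneg hD
    (fun x hx => (hderiv x hx).continuousAt.continuousWithinAt)
    (fun x hx => (hderiv x (interior_subset hx)).hasDerivWithinAt) fun x hx => ?_
  have hnonneg : 0 ≤ u' x + φ' x * u x := by linarith [h x (interior_subset hx)]
  positivity

theorem le_exp_sub_mul_of_exp_mul_le {a b x y : ℝ} (h : exp a * x ≤ exp b * y) :
    x ≤ exp (b - a) * y := by
  rw [exp_sub, div_mul_eq_mul_div, le_div_iff₀ (exp_pos a), mul_comm]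
  exact h

theorem stmt_9_general (r₀ c : ℝ) (N N' : ℝ → ℝ)
    (hderiv : ∀ r ∈ Set.Ioc (0 : ℝ) r₀, HasDerivAt N (N' r) r)
    (hineq : ∀ r ∈ Set.Ioc (0 : ℝ) r₀, -2 * c * r * (1 + N r) ≤ N' r) :
    ∀ s r : ℝ, 0 < s → s ≤ r → r ≤ r₀ →
      1 + N s ≤ Real.exp (c * (r ^ 2 - s ^ 2)) * (1 + N r) ∧
      N s ≤ Real.exp (c * (r ^ 2 - s ^ 2)) * N r + (Real.exp (c * (r ^ 2 - s ^ 2)) - 1) := by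
  intro s r hs hsr hrr₀
  have hsub : Icc s r ⊆ Ioc 0 r₀ := fun x hx => ⟨hs.trans_le hx.1, hx.2.trans hrr₀⟩
  have hmono : MonotoneOn (fun x => exp (c * x ^ 2) * (1 + N x)) (Icc s r) :=
    monotoneOn_exp_mul_of_neg_mul_le_deriv (convex_Icc s r)
      (fun x hx => (hderiv x (hsub hx)).const_add 1)
      (fun x _ => by simpa using (hasDerivAt_pow 2 x).const_mul c)
      (fun x hx => by linarith [hineq x (hsub hx)])
  have key : 1 + N s ≤ exp (c * (r ^ 2 - s ^ 2)) * (1 + N r) := by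
    rw [mul_sub]
    exact le_exp_sub_mul_of_exp_mul_le
      (hmono (left_mem_Icc.mpr hsr) (right_mem_Icc.mpr hsr) hsr)
  exact ⟨key, by linarith⟩

/-- almost monotonicity of the frequency function: if `N` is
differentiable on `(0, r₀]` with `N'(r) ≥ -2cr(1 + N(r))`, `1 + N(r) > 0` and `c ≥ 0`,
then for `0 < s ≤ r ≤ r₀` one has `1 + N(s) ≤ e^{c(r²−s²)}(1 + N(r))`, and in
particular `N(s) ≤ e^{c(r²−s²)} N(r) + (e^{c(r²−s²)} − 1)`. -/
theorem stmt_9 (r₀ c : ℝ) (hr₀ : 0 < r₀) (hc : 0 ≤ c) (N N' : ℝ → ℝ)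
    (hderiv : ∀ r ∈ Set.Ioc (0 : ℝ) r₀, HasDerivAt N (N' r) r)
    (hpos : ∀ r ∈ Set.Ioc (0 : ℝ) r₀, 0 < 1 + N r)
    (hineq : ∀ r ∈ Set.Ioc (0 : ℝ) r₀, -2 * c * r * (1 + N r) ≤ N' r) :
    ∀ s r : ℝ, 0 < s → s ≤ r → r ≤ r₀ →
      1 + N s ≤ Real.exp (c * (r ^ 2 - s ^ 2)) * (1 + N r) ∧
      N s ≤ Real.exp (c * (r ^ 2 - s ^ 2)) * N r + (Real.exp (c * (r ^ 2 - s ^ 2)) - 1) :=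
  stmt_9_general r₀ c N N' hderiv hineq
end

section
/- Let h : (0, r₀] → (0, ∞) be differentiable and suppose h'(r) = (2 + 2N(r) + E(r))·h(r)/r where N(r) ≥ 0 and |E(r)| ≤ Cr² for all r. Then for 0 < s < r ≤ r₀: h(s) ≤ e^{C(r²−s²)/2}·(s/r)²·exp(−2∫_s^r N(t)/t dt)·h(r) ≤ e^{C r²/2}·(s/r)²·h(r). In particular h(s) ≲ (s/r)²·h(r). -/
/-!
Along a solution, `(log h)' = h'/h = (2 + 2N + E)/t ≥ 2/t + 2N/t - Ct` because `E ≥ -Ct²`.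
Integrating this lower bound from `s` to `r` bounds `log h r - log h s` from below by
`2 log (r/s) + 2∫ₛʳ N/t - C(r² - s²)/2`; exponentiating gives the first inequality, and
`N ≥ 0`, `C ≥ 0` give the second.
-/

open MeasureTheory Set Real

/-- Only `φ` has to be integrable: the comparison goes through `log ∘ h`, not `∫ h'/h`. -/
theorem le_exp_neg_integral_mul_of_le_logDeriv {h h' φ : ℝ → ℝ} {a b : ℝ} (hab : a ≤ b)
    (hpos : ∀ t ∈ Icc a b, 0 < h t) (hderiv : ∀ t ∈ Icc a b, HasDerivAt h (h' t) t)
    (hφ : IntervalIntegrable φ volume a b) (hle : ∀ t ∈ Ioo a b, φ t ≤ h' t / h t) :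
    h a ≤ exp (-∫ t in a..b, φ t) * h b := by
  have hlog : ∀ t ∈ Icc a b, HasDerivAt (fun t => log (h t)) (h' t / h t) t :=
    fun t ht => (hderiv t ht).log (hpos t ht).ne'
  have hint : (∫ t in a..b, φ t) ≤ log (h b) - log (h a) :=
    intervalIntegral.integral_le_sub_of_hasDeriv_right_of_le hab
      (fun t ht => (hlog t ht).continuousAt.continuousWithinAt)
      (fun t ht => (hlog t (Ioo_subset_Icc_self ht)).hasDerivWithinAt)
      ((intervalIntegrable_iff_integrableOn_Icc_of_le hab).mp hφ) hle
  calc h a = exp (log (h a)) := (exp_log (hpos a (left_mem_Icc.mpr hab))).symm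
    _ ≤ exp (-(∫ t in a..b, φ t) + log (h b)) := exp_le_exp.mpr (by linarith)
    _ = exp (-∫ t in a..b, φ t) * h b := by
      rw [exp_add, exp_log (hpos b (right_mem_Icc.mpr hab))]

theorem two_div_add_sub_le_of_eq_mul_div {t C n e x y : ℝ} (ht : 0 < t) (hy : 0 < y)
    (hx : x = (2 + 2 * n + e) * y / t) (he : |e| ≤ C * t ^ 2) :
    2 / t + 2 * (n / t) - C * t ≤ x / y := by
  have hxy : x / y = (2 + 2 * n + e) / t := by
    rw [hx]; field_simp
  have hCt : -(C * t) ≤ e / t := by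
    rw [le_div_iff₀ ht]
    nlinarith [neg_abs_le e]
  rw [hxy, add_div, add_div, mul_div_assoc]
  linarith

theorem intervalIntegrable_two_div_of_pos {s r : ℝ} (hs : 0 < s) (hsr : s ≤ r) :
    IntervalIntegrable (fun t => 2 / t) volume s r :=
  (continuousOn_const.div continuousOn_id fun _ ht =>
    (hs.trans_le (uIcc_of_le hsr ▸ ht).1).ne').intervalIntegrable

theorem exp_neg_integral_two_div_add_sub {N : ℝ → ℝ} {C s r : ℝ} (hs : 0 < s)
    (hsr : s ≤ r) (hN : IntervalIntegrable (fun t => N t / t) volume s r) :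
    exp (-∫ t in s..r, (2 / t + 2 * (N t / t) - C * t)) =
      exp (C * (r ^ 2 - s ^ 2) / 2) * (s / r) ^ 2 * exp (-2 * ∫ t in s..r, N t / t) := by
  have h0 : (0 : ℝ) ∉ uIcc s r := by
    rw [uIcc_of_le hsr]
    exact fun h => hs.not_ge h.1
  have hinv := intervalIntegrable_two_div_of_pos hs hsr
  have hCt : IntervalIntegrable (fun t => C * t) volume s r :=
    (continuous_const.mul continuous_id).intervalIntegrable _ _
  have hsplit : (∫ t in s..r, (2 / t + 2 * (N t / t) - C * t)) =
      2 * log (r / s) + 2 * (∫ t in s..r, N t / t) - C * (r ^ 2 - s ^ 2) / 2 := by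
    rw [intervalIntegral.integral_sub (hinv.add (hN.const_mul 2)) hCt,
      intervalIntegral.integral_add hinv (hN.const_mul 2), intervalIntegral.integral_const_mul,
      intervalIntegral.integral_const_mul, integral_id]
    simp only [div_eq_mul_inv, intervalIntegral.integral_const_mul, integral_inv h0]
    ring
  have hsq : exp (-(2 * log (r / s))) = (s / r) ^ 2 := by
    rw [← mul_neg, ← log_inv, inv_div,
      show (2 : ℝ) * log (s / r) = log ((s / r) ^ 2) by rw [log_pow]; norm_num,
      exp_log (pow_pos (div_pos hs (hs.trans_le hsr)) 2)]
  rw [hsplit, show -(2 * log (r / s) + 2 * (∫ t in s..r, N t / t) - C * (r ^ 2 - s ^ 2) / 2) =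
      C * (r ^ 2 - s ^ 2) / 2 + -(2 * log (r / s)) + -2 * (∫ t in s..r, N t / t) by ring,
    exp_add, exp_add, hsq]

theorem stmt_10_general (r₀ C : ℝ) (hC : 0 ≤ C)
    (h h' N E : ℝ → ℝ)
    (hpos : ∀ r ∈ Set.Ioc (0 : ℝ) r₀, 0 < h r)
    (hderiv : ∀ r ∈ Set.Ioc (0 : ℝ) r₀, HasDerivAt h (h' r) r)
    (hode : ∀ r ∈ Set.Ioc (0 : ℝ) r₀, h' r = (2 + 2 * N r + E r) * h r / r)
    (hN : ∀ r ∈ Set.Ioc (0 : ℝ) r₀, 0 ≤ N r)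
    (hE : ∀ r ∈ Set.Ioc (0 : ℝ) r₀, |E r| ≤ C * r ^ 2)
    (hint : ∀ s r : ℝ, 0 < s → s ≤ r → r ≤ r₀ →
      IntervalIntegrable (fun t => N t / t) MeasureTheory.volume s r) :
    ∀ s r : ℝ, 0 < s → s < r → r ≤ r₀ →
      h s ≤ Real.exp (C * (r ^ 2 - s ^ 2) / 2) * (s / r) ^ 2 *
              Real.exp (-2 * ∫ t in s..r, N t / t) * h r ∧
      Real.exp (C * (r ^ 2 - s ^ 2) / 2) * (s / r) ^ 2 *
          Real.exp (-2 * ∫ t in s..r, N t / t) * h r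
        ≤ Real.exp (C * r ^ 2 / 2) * (s / r) ^ 2 * h r := by
  intro s r hs hsr hrr₀
  have hsub : Icc s r ⊆ Ioc 0 r₀ := fun t ht => ⟨hs.trans_le ht.1, ht.2.trans hrr₀⟩
  have hNint := hint s r hs hsr.le hrr₀
  have hφ : IntervalIntegrable (fun t => 2 / t + 2 * (N t / t) - C * t) volume s r :=
    ((intervalIntegrable_two_div_of_pos hs hsr.le).add (hNint.const_mul 2)).sub
      ((continuous_const.mul continuous_id).intervalIntegrable _ _)
  refine ⟨?_, ?_⟩
  · rw [← exp_neg_integral_two_div_add_sub hs hsr.le hNint]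
    refine le_exp_neg_integral_mul_of_le_logDeriv hsr.le (fun t ht => hpos t (hsub ht))
      (fun t ht => hderiv t (hsub ht)) hφ fun t ht => ?_
    have ht := hsub (Ioo_subset_Icc_self ht)
    exact two_div_add_sub_le_of_eq_mul_div ht.1 (hpos t ht) (hode t ht) (hE t ht)
  · have hI : 0 ≤ ∫ t in s..r, N t / t :=
      intervalIntegral.integral_nonneg hsr.le fun t ht =>
        div_nonneg (hN t (hsub ht)) (hsub ht).1.le
    have hexp : exp (C * (r ^ 2 - s ^ 2) / 2) * exp (-2 * ∫ t in s..r, N t / t) ≤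
        exp (C * r ^ 2 / 2) := by
      rw [← exp_add]
      exact exp_le_exp.mpr (by nlinarith [sq_nonneg s])
    have hhr := hpos r (hsub (right_mem_Icc.mpr hsr.le))
    calc _ = exp (C * (r ^ 2 - s ^ 2) / 2) * exp (-2 * ∫ t in s..r, N t / t) *
          ((s / r) ^ 2 * h r) := by ring
      _ ≤ exp (C * r ^ 2 / 2) * ((s / r) ^ 2 * h r) := by gcongr
      _ = _ := by ring

/-- if `h > 0` is differentiable with
`h'(r) = (2 + 2N(r) + E(r)) h(r) / r`, `N ≥ 0` and `|E(r)| ≤ C r²`, then for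
`0 < s < r ≤ r₀`:
`h(s) ≤ e^{C(r²−s²)/2} (s/r)² exp(−2∫ₛʳ N(t)/t dt) h(r) ≤ e^{Cr²/2} (s/r)² h(r)`. -/
theorem stmt_10 (r₀ C : ℝ) (hr₀ : 0 < r₀) (hC : 0 ≤ C)
    (h h' N E : ℝ → ℝ)
    (hpos : ∀ r ∈ Set.Ioc (0 : ℝ) r₀, 0 < h r)
    (hderiv : ∀ r ∈ Set.Ioc (0 : ℝ) r₀, HasDerivAt h (h' r) r)
    (hode : ∀ r ∈ Set.Ioc (0 : ℝ) r₀, h' r = (2 + 2 * N r + E r) * h r / r)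
    (hN : ∀ r ∈ Set.Ioc (0 : ℝ) r₀, 0 ≤ N r)
    (hE : ∀ r ∈ Set.Ioc (0 : ℝ) r₀, |E r| ≤ C * r ^ 2)
    (hint : ∀ s r : ℝ, 0 < s → s ≤ r → r ≤ r₀ →
      IntervalIntegrable (fun t => N t / t) MeasureTheory.volume s r) :
    ∀ s r : ℝ, 0 < s → s < r → r ≤ r₀ →
      h s ≤ Real.exp (C * (r ^ 2 - s ^ 2) / 2) * (s / r) ^ 2 *
              Real.exp (-2 * ∫ t in s..r, N t / t) * h r ∧
      Real.exp (C * (r ^ 2 - s ^ 2) / 2) * (s / r) ^ 2 *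
          Real.exp (-2 * ∫ t in s..r, N t / t) * h r
        ≤ Real.exp (C * r ^ 2 / 2) * (s / r) ^ 2 * h r :=
  stmt_10_general r₀ C hC h h' N E hpos hderiv hode hN hE hint
end

section
/- Let h : (0, r₀] → (0, ∞) be differentiable with h'(r)/h(r) = (2 + 2N(r))/r + E(r), |E(r)| ≤ Cr, and suppose N is nondecreasing up to constants in the sense that N(t) ≤ K·N(r) + K for all t ≤ r (with K ≥ 1). Then for 0 < s < r ≤ r₀: h(s) ≥ e^{-C r²/2}·(s/r)^{2 + 2K(N(r)+1)}·h(r). -/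
/-!
Comparing `log h` with `t ↦ A log t + C t² / 2` on `[s, r]`, where `A = 2 + 2K(N(r) + 1)`:
almost-monotonicity of `N` gives `h'/h ≤ (2 + 2N(t))/t + Ct ≤ A/t + Ct` there, so the
difference of the two functions is monotone, and exponentiating yields the power-law bound.
-/

open Real Set

theorem le_mul_exp_sub_of_div_le_deriv {f f' g g' : ℝ → ℝ} {a b : ℝ} (hab : a ≤ b)
    (hpos : ∀ t ∈ Icc a b, 0 < f t) (hf : ∀ t ∈ Icc a b, HasDerivAt f (f' t) t)
    (hg : ∀ t ∈ Icc a b, HasDerivAt g (g' t) t) (hle : ∀ t ∈ Ioo a b, f' t / f t ≤ g' t) :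
    f b ≤ f a * exp (g b - g a) := by
  have hderiv : ∀ t ∈ Icc a b,
      HasDerivAt (fun u => g u - log (f u)) (g' t - f' t / f t) t := fun t ht =>
    (hg t ht).sub ((hf t ht).log (hpos t ht).ne')
  have hmono : MonotoneOn (fun u => g u - log (f u)) (Icc a b) := by
    apply monotoneOn_of_deriv_nonneg (convex_Icc a b)
    · exact fun t ht => (hderiv t ht).continuousAt.continuousWithinAt
    · rw [interior_Icc]
      exact fun t ht => (hderiv t (Ioo_subset_Icc_self ht)).differentiableAt.differentiableWithinAt
    · rw [interior_Icc]
      intro t ht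
      rw [(hderiv t (Ioo_subset_Icc_self ht)).deriv, sub_nonneg]
      exact hle t ht
  have hlog : log (f b) ≤ log (f a) + (g b - g a) := by
    linarith [hmono (left_mem_Icc.mpr hab) (right_mem_Icc.mpr hab) hab]
  calc f b = exp (log (f b)) := (exp_log (hpos b (right_mem_Icc.mpr hab))).symm
    _ ≤ exp (log (f a) + (g b - g a)) := exp_le_exp.mpr hlog
    _ = f a * exp (g b - g a) := by rw [exp_add, exp_log (hpos a (left_mem_Icc.mpr hab))]

theorem exp_mul_rpow_mul_le_of_div_le_deriv {h h' : ℝ → ℝ} {A C s r : ℝ} (hs : 0 < s)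
    (hsr : s ≤ r) (hpos : ∀ t ∈ Icc s r, 0 < h t) (hderiv : ∀ t ∈ Icc s r, HasDerivAt h (h' t) t)
    (hle : ∀ t ∈ Ioo s r, h' t / h t ≤ A / t + C * t) :
    exp (-(C * (r ^ 2 - s ^ 2)) / 2) * (s / r) ^ A * h r ≤ h s := by
  have hr : 0 < r := hs.trans_le hsr
  have hg : ∀ t ∈ Icc s r,
      HasDerivAt (fun u => A * log u + C * u ^ 2 / 2) (A / t + C * t) t := fun t ht =>
    (((hasDerivAt_log (hs.trans_le ht.1).ne').const_mul A).add
      (((hasDerivAt_pow 2 t).const_mul C).div_const 2)).congr_deriv (by norm_num; ring)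
  have hbound := le_mul_exp_sub_of_div_le_deriv hsr hpos hderiv hg hle
  have hexp : exp (A * log r + C * r ^ 2 / 2 - (A * log s + C * s ^ 2 / 2))
      = (r / s) ^ A * exp (C * (r ^ 2 - s ^ 2) / 2) := by
    rw [rpow_def_of_pos (div_pos hr hs), log_div hr.ne' hs.ne', ← exp_add]
    ring_nf
  rw [hexp] at hbound
  have hrs : (s / r) ^ A * (r / s) ^ A = 1 := by
    rw [← mul_rpow (div_pos hs hr).le (div_pos hr hs).le, div_mul_div_comm, mul_comm s r,
      div_self (mul_pos hr hs).ne', one_rpow]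
  calc exp (-(C * (r ^ 2 - s ^ 2)) / 2) * (s / r) ^ A * h r
      ≤ exp (-(C * (r ^ 2 - s ^ 2)) / 2) * (s / r) ^ A
          * (h s * ((r / s) ^ A * exp (C * (r ^ 2 - s ^ 2) / 2))) := by
        gcongr
    _ = h s * ((s / r) ^ A * (r / s) ^ A) * (exp (-(C * (r ^ 2 - s ^ 2)) / 2)
          * exp (C * (r ^ 2 - s ^ 2) / 2)) := by ring
    _ = h s := by rw [hrs, ← exp_add, neg_div, neg_add_cancel, exp_zero, mul_one, mul_one]

theorem stmt_11_general (r₀ C K : ℝ) (hC : 0 ≤ C)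
    (h h' N : ℝ → ℝ)
    (hpos : ∀ r ∈ Set.Ioc (0 : ℝ) r₀, 0 < h r)
    (hderiv : ∀ r ∈ Set.Ioc (0 : ℝ) r₀, HasDerivAt h (h' r) r)
    (hE : ∀ r ∈ Set.Ioc (0 : ℝ) r₀, |h' r / h r - (2 + 2 * N r) / r| ≤ C * r)
    (hmono : ∀ t r : ℝ, 0 < t → t ≤ r → r ≤ r₀ → N t ≤ K * N r + K) :
    ∀ s r : ℝ, 0 < s → s < r → r ≤ r₀ →
      Real.exp (-(C * r ^ 2) / 2) * (s / r) ^ (2 + 2 * K * (N r + 1)) * h r ≤ h s := by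
  intro s r hs hsr hrr₀
  have hsub : Icc s r ⊆ Ioc 0 r₀ := fun t ht => ⟨hs.trans_le ht.1, ht.2.trans hrr₀⟩
  have hlogDeriv : ∀ t ∈ Ioo s r,
      h' t / h t ≤ (2 + 2 * K * (N r + 1)) / t + C * t := by
    intro t ht
    have ht₀ := hsub (Ioo_subset_Icc_self ht)
    have hN := hmono t r ht₀.1 ht.2.le hrr₀
    have hnum : (2 + 2 * N t) / t ≤ (2 + 2 * K * (N r + 1)) / t :=
      div_le_div_of_nonneg_right (by linarith) ht₀.1.le
    linarith [(abs_le.mp (hE t ht₀)).2]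
  calc Real.exp (-(C * r ^ 2) / 2) * (s / r) ^ (2 + 2 * K * (N r + 1)) * h r
      ≤ Real.exp (-(C * (r ^ 2 - s ^ 2)) / 2) * (s / r) ^ (2 + 2 * K * (N r + 1)) * h r := by
        have hhr := hpos r (hsub (right_mem_Icc.mpr hsr.le))
        gcongr
        · exact rpow_nonneg (div_pos hs (hs.trans hsr)).le _
        · nlinarith
    _ ≤ h s := exp_mul_rpow_mul_le_of_div_le_deriv hs hsr.le (fun t ht => hpos t (hsub ht))
        (fun t ht => hderiv t (hsub ht)) hlogDeriv

/-- "N controls the growth of h": if `h > 0` is differentiable with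
`h'(r)/h(r) = (2 + 2N(r))/r + E(r)`, `|E(r)| ≤ Cr`, and `N(t) ≤ K·N(r) + K` whenever
`t ≤ r` (with `K ≥ 1`), then for `0 < s < r ≤ r₀`:
`h(s) ≥ e^{-Cr²/2} (s/r)^{2 + 2K(N(r)+1)} h(r)`. -/
theorem stmt_11 (r₀ C K : ℝ) (hr₀ : 0 < r₀) (hC : 0 ≤ C) (hK : 1 ≤ K)
    (h h' N : ℝ → ℝ)
    (hpos : ∀ r ∈ Set.Ioc (0 : ℝ) r₀, 0 < h r)
    (hderiv : ∀ r ∈ Set.Ioc (0 : ℝ) r₀, HasDerivAt h (h' r) r)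
    (hE : ∀ r ∈ Set.Ioc (0 : ℝ) r₀, |h' r / h r - (2 + 2 * N r) / r| ≤ C * r)
    (hNcont : ContinuousOn N (Set.Ioc (0 : ℝ) r₀))
    (hmono : ∀ t r : ℝ, 0 < t → t ≤ r → r ≤ r₀ → N t ≤ K * N r + K) :
    ∀ s r : ℝ, 0 < s → s < r → r ≤ r₀ →
      Real.exp (-(C * r ^ 2) / 2) * (s / r) ^ (2 + 2 * K * (N r + 1)) * h r ≤ h s :=
  stmt_11_general r₀ C K hC h h' N hpos hderiv hE hmono
end

section
/- Let ρ : Y → (0, ∞) be a function on a metric space Y bounded below by some ρ_min > 0, and fix x ∈ Y. Then there exists a point x' with d(x, x') < 2ρ(x) such that ρ(x') ≤ ρ(x) and ρ(x') ≤ 2·inf{ρ(y) : y ∈ B(x', ρ(x'))}. -/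
lemma aux14 {Y : Type*} [MetricSpace Y] (ρ : Y → ℝ) (ρmin : ℝ) (hmin : 0 < ρmin)
    (hlb : ∀ y, ρmin ≤ ρ y) :
    ∀ n : ℕ, ∀ x : Y, ρ x ≤ 2 ^ n * ρmin →
    ∃ x' : Y, dist x x' < 2 * ρ x ∧ ρ x' ≤ ρ x ∧
      ∀ y ∈ Metric.ball x' (ρ x'), ρ x' ≤ 2 * ρ y := by
  intro n
  induction n with
  | zero =>
    intro x hx
    refine ⟨x, ?_, le_refl _, ?_⟩
    · simp only [dist_self]; linarith [hlb x, hmin]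
    · intro y _
      have : ρ x ≤ ρ y := le_trans (by simpa using hx) (hlb y)
      linarith [hlb y, hmin]
  | succ n ih =>
    intro x hx
    by_cases h : ∀ y ∈ Metric.ball x (ρ x), ρ x ≤ 2 * ρ y
    · exact ⟨x, by simp only [dist_self]; linarith [hlb x, hmin], le_refl _, h⟩
    · push_neg at h
      obtain ⟨y, hy, hy2⟩ := h
      have hρy : ρ y ≤ 2 ^ n * ρmin := by
        have : (2:ℝ) ^ (n+1) = 2 * 2 ^ n := by ring
        nlinarith
      obtain ⟨x', h1, h2, h3⟩ := ih y hρy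
      refine ⟨x', ?_, ?_, h3⟩
      · calc dist x x' ≤ dist x y + dist y x' := dist_triangle _ _ _
          _ < ρ x + 2 * ρ y := by
              have := Metric.mem_ball.mp hy
              rw [dist_comm] at this; linarith
          _ < 2 * ρ x := by linarith
      · linarith [hlb x', hmin]

/-- toss-pick construction for the critical radius: if `ρ : Y → (0, ∞)`
is bounded below by `ρ_min > 0` on a metric space `Y`, then for every `x` there is `x'`
with `d(x, x') < 2ρ(x)`, `ρ(x') ≤ ρ(x)`, and `ρ(x') ≤ 2·inf{ρ(y) : y ∈ B(x', ρ(x'))}`. -/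
theorem stmt_14 {Y : Type*} [MetricSpace Y] (ρ : Y → ℝ) (ρmin : ℝ) (hmin : 0 < ρmin)
    (hlb : ∀ y, ρmin ≤ ρ y) (x : Y) :
    ∃ x' : Y, dist x x' < 2 * ρ x ∧ ρ x' ≤ ρ x ∧
      ∀ y ∈ Metric.ball x' (ρ x'), ρ x' ≤ 2 * ρ y := by
  obtain ⟨n, hn⟩ := pow_unbounded_of_one_lt (ρ x / ρmin) (one_lt_two (α := ℝ))
  exact aux14 ρ ρmin hmin hlb n x (by rw [div_lt_iff₀ hmin] at hn; nlinarith)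
end
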